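/- Suppose φ is UCI with Denjoy-Wolff point a ∈ ∂𝔻, ψ ∈ H^∞ is continuous at a, and ψ(a) ≠ 0. Then ρ(W_{ψ,φ}) = |ψ(a)|·ρ(C_φ). -/

import Mathlib

open Complex Metric Filter Set
open scoped ENNReal NNReal Topology InnerProductSpace

noncomputable section

/-- The open unit disk in ℂ. -/
def unitDisk : Set ℂ := Metric.ball (0 : ℂ) 1

/-- The Hardy space `H²`, modeled by the ℓ² space of Taylor coefficient sequences:
`f ∈ H²` corresponds to the analytic function `z ↦ ∑ₙ f n * zⁿ` on the disk, and the
`H²` norm is the `ℓ²` norm of the coefficients. -/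
abbrev H2 := lp (fun _ : ℕ => ℂ) 2

/-- Evaluation of an element of `H²` (given by its coefficient sequence) at a point. -/
def H2.eval (f : H2) (z : ℂ) : ℂ := ∑' n, f n * z ^ n

/-- `φ` is an analytic self-map of the unit disk. -/
def IsSelfMapOfDisk (φ : ℂ → ℂ) : Prop :=
  DifferentiableOn ℂ φ unitDisk ∧ Set.MapsTo φ unitDisk unitDisk

/-- `ψ ∈ H^∞`: bounded analytic function on the disk. -/
def MemHinf (ψ : ℂ → ℂ) : Prop :=
  DifferentiableOn ℂ ψ unitDisk ∧ BddAbove ((fun z => ‖ψ z‖) '' unitDisk)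

/-- The supremum norm `‖ψ‖_∞` of `ψ` over the disk. -/
def hinfNorm (ψ : ℂ → ℂ) : ℝ := sSup ((fun z => ‖ψ z‖) '' unitDisk)

/-- `W` is the weighted composition operator `W_{ψ,φ}` on `H²`:
`(W f)(z) = ψ(z) * f(φ(z))` for every `f ∈ H²` and `z` in the disk. -/
def IsWCO (ψ φ : ℂ → ℂ) (W : H2 →L[ℂ] H2) : Prop :=
  ∀ f : H2, ∀ z ∈ unitDisk, H2.eval (W f) z = ψ z * H2.eval f (φ z)

/-- `C` is the composition operator `C_φ` on `H²`: `(C f)(z) = f(φ(z))`. -/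
def IsCO (φ : ℂ → ℂ) (C : H2 →L[ℂ] H2) : Prop :=
  ∀ f : H2, ∀ z ∈ unitDisk, H2.eval (C f) z = H2.eval f (φ z)

/-- `a` is the Denjoy–Wolff point of `φ`: `a` lies in the closed disk and the iterates
of `φ` converge to `a` uniformly on compact subsets of the open disk. -/
def IsDenjoyWolff (φ : ℂ → ℂ) (a : ℂ) : Prop :=
  a ∈ closure unitDisk ∧
    ∀ K : Set ℂ, K ⊆ unitDisk → IsCompact K →
      TendstoUniformlyOn (fun n => φ^[n]) (fun _ => a) atTop K

/-- A bounded operator is normaloid if its norm equals its spectral radius. -/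
def IsNormaloid (T : H2 →L[ℂ] H2) : Prop :=
  spectralRadius ℂ T = (‖T‖₊ : ℝ≥0∞)

/-- The reproducing kernel of `H²` at `a`: `K_a(z) = 1/(1 - conj(a)·z)`. -/
def hardyKernel (a z : ℂ) : ℂ := 1 / (1 - (starRingEnd ℂ) a * z)

/-!
`(Wⁿ f)(z) = ∏_{j<n} ψ(φ_j z) · f(φ_n z)`. Since `φ_j → a` uniformly on the disk and `ψ` is
continuous at `a`, all factors with `j ≥ N` are within `ε` of `|ψ(a)|`, uniformly in `z`.
In `H²` a pointwise bound `|g| ≤ M |h|` on the disk gives `‖g‖ ≤ M ‖h‖` (Parseval on the circles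
of radius `r < 1`, then `r → 1`). Hence `‖W^{N+n}‖ ≤ K (|ψ(a)| + ε)ⁿ ‖Cⁿ‖` and
`‖C^{N+n}‖ ≤ K' (|ψ(a)| - ε)⁻ⁿ ‖Wⁿ‖`, and Gelfand's formula turns these into
`(|ψ(a)| - ε) ρ(C) ≤ ρ(W) ≤ (|ψ(a)| + ε) ρ(C)`.
-/

open MeasureTheory AddCircle Finset

namespace H2

instance : Nontrivial H2 :=
  ⟨⟨lp.single 2 0 1, 0, fun h => by simpa using congrArg (fun f : H2 => f 0) h⟩⟩

section Circle

variable {T : ℝ} [Fact (0 < T)]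

/-- The boundary values `θ ↦ f(e^{2πiθ/T})` of `f ∈ H²`; only meaningful when the coefficients
are absolutely summable (otherwise the `tsum` is the junk value `0`). -/
def circleRestrict (T : ℝ) (f : H2) : C(AddCircle T, ℂ) :=
  ∑' n : ℕ, f n • fourier (n : ℤ)

variable {f : H2} (hf : Summable fun n => ‖f n‖)
include hf

theorem hasSum_circleRestrict :
    HasSum (fun n : ℕ => f n • fourier (T := T) (n : ℤ)) (circleRestrict T f) := by
  refine (Summable.of_norm ?_).hasSum
  simpa [norm_smul, fourier_norm] using hf

theorem circleRestrict_apply (x : AddCircle T) :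
    circleRestrict T f x = H2.eval f (toCircle x) := by
  refine ((hasSum_circleRestrict hf).map (ContinuousMap.evalCLM ℂ x)
    (ContinuousMap.evalCLM ℂ x).continuous).unique ?_
  have hpow : ∀ n : ℕ, fourier (n : ℤ) x = (toCircle x : ℂ) ^ n := fun n => by
    rw [fourier_apply, natCast_zsmul, toCircle_nsmul, Circle.coe_pow]
  simp only [Function.comp_def, ContinuousMap.evalCLM_apply, ContinuousMap.smul_apply, hpow,
    smul_eq_mul]
  refine (Summable.of_norm ?_).hasSum
  simpa [Circle.norm_coe] using hf

-- Parseval, from the orthonormality of the monomials `fourier n` in `L²`.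
theorem norm_toLp_circleRestrict :
    ‖ContinuousMap.toLp 2 haarAddCircle ℂ (circleRestrict T f)‖ = ‖f‖ := by
  have hv : Orthonormal ℂ (fun n : ℕ => fourierLp (T := T) 2 (n : ℤ)) :=
    (orthonormal_fourier (T := T)).comp _ Nat.cast_injective
  rw [← hv.orthogonalFamily.linearIsometry.norm_map f]
  congr 1
  refine ((hasSum_circleRestrict hf).mapL (ContinuousMap.toLp 2 haarAddCircle ℂ)).unique ?_
  simpa [LinearIsometry.toSpanSingleton_apply, fourierLp] using
    hv.orthogonalFamily.hasSum_linearIsometry f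

end Circle

theorem norm_le_mul_norm_of_norm_eval_le_on_circle {f g : H2} (hf : Summable fun n => ‖f n‖)
    (hg : Summable fun n => ‖g n‖) {M : ℝ}
    (hle : ∀ w : ℂ, ‖w‖ = 1 → ‖H2.eval f w‖ ≤ M * ‖H2.eval g w‖) : ‖f‖ ≤ M * ‖g‖ := by
  have : Fact ((0 : ℝ) < 1) := ⟨one_pos⟩
  rw [← norm_toLp_circleRestrict (T := 1) hf, ← norm_toLp_circleRestrict (T := 1) hg]
  refine Lp.norm_le_mul_norm_of_ae_le_mul ?_
  filter_upwards [ContinuousMap.coeFn_toLp (p := 2) (𝕜 := ℂ) haarAddCircle (circleRestrict 1 f),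
    ContinuousMap.coeFn_toLp (p := 2) (𝕜 := ℂ) haarAddCircle (circleRestrict 1 g)]
    with x hfx hgx
  rw [hfx, hgx, circleRestrict_apply hf, circleRestrict_apply hg]
  exact hle _ (Circle.norm_coe _)

def dilate (f : H2) {r : ℂ} (hr : ‖r‖ ≤ 1) : H2 :=
  ⟨fun n => f n * r ^ n, (lp.memℓp f).mono' fun n => by
    simpa [norm_mul] using
      mul_le_of_le_one_right (norm_nonneg (f n)) (pow_le_one₀ (norm_nonneg r) hr)⟩

section Dilate

variable (f : H2) {r : ℂ}

theorem dilate_apply (hr : ‖r‖ ≤ 1) (n : ℕ) : dilate f hr n = f n * r ^ n := rfl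

theorem eval_dilate (hr : ‖r‖ ≤ 1) (w : ℂ) : H2.eval (dilate f hr) w = H2.eval f (r * w) := by
  simp only [H2.eval, dilate_apply, mul_pow, mul_assoc]

theorem norm_dilate_le (hr : ‖r‖ ≤ 1) : ‖dilate f hr‖ ≤ ‖f‖ :=
  lp.norm_mono two_ne_zero fun n => by
    simpa [dilate_apply, norm_mul] using
      mul_le_of_le_one_right (norm_nonneg (f n)) (pow_le_one₀ (norm_nonneg r) hr)

theorem summable_norm_dilate (hr : ‖r‖ < 1) : Summable fun n => ‖dilate f hr.le n‖ := by
  refine Summable.of_nonneg_of_le (fun n => norm_nonneg _) (fun n => ?_)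
    ((summable_geometric_of_lt_one (norm_nonneg r) hr).mul_left ‖f‖)
  rw [dilate_apply, norm_mul, norm_pow]
  exact mul_le_mul_of_nonneg_right (lp.norm_apply_le_norm two_ne_zero f n) (by positivity)

end Dilate

theorem norm_le_mul_norm_of_norm_eval_le {f g : H2} {M : ℝ} (hM : 0 ≤ M)
    (hle : ∀ z ∈ unitDisk, ‖H2.eval f z‖ ≤ M * ‖H2.eval g z‖) : ‖f‖ ≤ M * ‖g‖ := by
  have hr : ∀ k : ℕ, ‖(k / (k + 1) : ℂ)‖ < 1 := fun k => by
    rw [norm_div, Complex.norm_natCast, ← Nat.cast_add_one, Complex.norm_natCast,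
      div_lt_one (by positivity)]
    simp
  -- The dilations `f(r_k ·)`, `r_k = k / (k + 1)`, converge to `f` coefficientwise.
  refine lp.norm_le_of_tendsto (l := atTop) (F := fun k => dilate f (hr k).le)
    (.of_forall fun k => ?_) ?_
  · calc ‖dilate f (hr k).le‖ ≤ M * ‖dilate g (hr k).le‖ := by
          refine norm_le_mul_norm_of_norm_eval_le_on_circle (summable_norm_dilate f (hr k))
            (summable_norm_dilate g (hr k)) fun w hw => ?_
          rw [eval_dilate, eval_dilate]
          refine hle _ ?_
          rw [unitDisk, mem_ball_zero_iff, norm_mul, hw, mul_one]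
          exact hr k
      _ ≤ M * ‖g‖ := by gcongr; exact norm_dilate_le g _
  · refine tendsto_pi_nhds.2 fun n => ?_
    simpa [dilate_apply] using
      ((tendsto_natCast_div_add_atTop (1 : ℂ)).pow n).const_mul (f n)

end H2

section SpectralRadius

variable {A : Type*} [NormedRing A] [NormedAlgebra ℂ A] [CompleteSpace A] [NormOneClass A]

theorem spectralRadius_ne_top (a : A) : spectralRadius ℂ a ≠ ⊤ :=
  ne_top_of_le_ne_top ENNReal.coe_ne_top (spectrum.spectralRadius_le_nnnorm a)

theorem spectralRadius_toReal_pow_le_norm (a : A) (n : ℕ) :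
    (spectralRadius ℂ a).toReal ^ n ≤ ‖a ^ n‖ := by
  have : Nontrivial A := NormOneClass.nontrivial
  rw [← ENNReal.toReal_pow, ← coe_nnnorm, ← ENNReal.coe_toReal]
  exact ENNReal.toReal_mono ENNReal.coe_ne_top
    ((spectrum.spectralRadius_pow_le' a n).trans (spectrum.spectralRadius_le_nnnorm _))

theorem tendsto_norm_pow_rpow_spectralRadius_toReal (a : A) :
    Tendsto (fun n : ℕ => ‖a ^ n‖ ^ (1 / n : ℝ)) atTop (𝓝 (spectralRadius ℂ a).toReal) := by
  refine ((ENNReal.tendsto_toReal (spectralRadius_ne_top a)).comp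
    (spectrum.pow_nnnorm_pow_one_div_tendsto_nhds_spectralRadius a)).congr fun n => ?_
  simp [← ENNReal.toReal_rpow]

theorem le_mul_spectralRadius_toReal_of_pow_le (a : A) {x K c : ℝ} (hx : 0 ≤ x) (hc : 0 ≤ c)
    (h : ∀ᶠ n in atTop, x ^ n ≤ K * c ^ n * ‖a ^ n‖) :
    x ≤ c * (spectralRadius ℂ a).toReal := by
  set K' := max K 1
  have hK' : 0 < K' := lt_max_of_lt_right one_pos
  have hlim : Tendsto (fun n : ℕ => K' ^ (1 / n : ℝ) * c * ‖a ^ n‖ ^ (1 / n : ℝ)) atTop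
      (𝓝 (1 * c * (spectralRadius ℂ a).toReal)) := by
    refine (Tendsto.mul_const c ?_).mul (tendsto_norm_pow_rpow_spectralRadius_toReal a)
    simpa using tendsto_const_nhds.rpow tendsto_one_div_atTop_nhds_zero_nat (.inl hK'.ne')
  rw [one_mul] at hlim
  refine ge_of_tendsto hlim ((h.and (eventually_ne_atTop 0)).mono fun n ⟨hn, hn0⟩ => ?_)
  have hxn : x ^ n ≤ K' * c ^ n * ‖a ^ n‖ :=
    hn.trans (by gcongr; exact le_max_left K 1)
  calc x = (x ^ n) ^ (1 / n : ℝ) := by rw [one_div, Real.pow_rpow_inv_natCast hx hn0]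
    _ ≤ (K' * c ^ n * ‖a ^ n‖) ^ (1 / n : ℝ) := by gcongr
    _ = K' ^ (1 / n : ℝ) * c * ‖a ^ n‖ ^ (1 / n : ℝ) := by
      rw [Real.mul_rpow (by positivity) (norm_nonneg _), Real.mul_rpow hK'.le (by positivity),
        one_div, Real.pow_rpow_inv_natCast hc hn0]

theorem spectralRadius_toReal_le_of_norm_pow_add_le (a b : A) (k : ℕ) {K c : ℝ} (hc : 0 ≤ c)
    (h : ∀ᶠ n in atTop, ‖a ^ (k + n)‖ ≤ K * c ^ n * ‖b ^ n‖) :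
    (spectralRadius ℂ a).toReal ≤ c * (spectralRadius ℂ b).toReal := by
  set x := (spectralRadius ℂ a).toReal
  have hx0 : 0 ≤ x := ENNReal.toReal_nonneg
  rcases hx0.eq_or_lt with hx | hx
  · rw [← hx]
    exact mul_nonneg hc ENNReal.toReal_nonneg
  refine le_mul_spectralRadius_toReal_of_pow_le b hx.le hc (K := K / x ^ k)
    (h.mono fun n hn => ?_)
  rw [div_mul_eq_mul_div, div_mul_eq_mul_div, le_div_iff₀ (by positivity), ← pow_add, add_comm]
  exact (spectralRadius_toReal_pow_le_norm a (k + n)).trans hn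

end SpectralRadius

theorem TendstoUniformlyOn.eventually_forall_comp_mem {ι α β γ : Type*} [UniformSpace β]
    [TopologicalSpace γ] {l : Filter ι} {F : ι → α → β} {a : β} {s : Set α} {t : Set β}
    {g : β → γ} {U : Set γ} (hF : TendstoUniformlyOn F (fun _ => a) l s)
    (hFt : ∀ i, MapsTo (F i) s t) (hg : ContinuousWithinAt g (insert a t) a)
    (hU : U ∈ 𝓝 (g a)) : ∀ᶠ i in l, ∀ x ∈ s, g (F i x) ∈ U := by
  obtain ⟨V, hV, hVU⟩ := mem_nhdsWithin_iff_exists_mem_nhds_inter.1 (hg hU)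
  obtain ⟨u, hu, hball⟩ := UniformSpace.mem_nhds_iff.1 hV
  filter_upwards [hF u hu] with i hi x hx
  exact hVU ⟨hball (hi x hx), mem_insert_of_mem a (hFt i hx)⟩

theorem eq_mul_of_le_mul_of_mul_le {x y b : ℝ} (hb : 0 < b) (hup : ∀ c, b < c → x ≤ c * y)
    (hlo : ∀ c, 0 < c → c < b → c * y ≤ x) : x = b * y := by
  have hcont : Continuous fun c : ℝ => c * y := continuous_mul_const y
  refine le_antisymm (ge_of_tendsto (hcont.continuousWithinAt (s := Ioi b)).tendsto ?_)
    (le_of_tendsto (hcont.continuousWithinAt (s := Iio b)).tendsto ?_)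
  · exact eventually_nhdsWithin_of_forall fun c hc => hup c hc
  · filter_upwards [Ioo_mem_nhdsLT hb] with c hc using hlo c hc.1 hc.2

section WeightedComposition

variable {φ ψ : ℂ → ℂ} {C W : H2 →L[ℂ] H2}

theorem IsCO.isWCO (hC : IsCO φ C) : IsWCO (fun _ => 1) φ C :=
  fun f z hz => by rw [hC f z hz, one_mul]

theorem IsWCO.eval_pow (hφ : MapsTo φ unitDisk unitDisk) (hW : IsWCO ψ φ W) (n : ℕ) (f : H2)
    {z : ℂ} (hz : z ∈ unitDisk) :
    H2.eval ((W ^ n) f) z = (∏ j ∈ range n, ψ (φ^[j] z)) * H2.eval f (φ^[n] z) := by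
  induction n generalizing f with
  | zero => simp
  | succ n ih =>
    rw [pow_succ, mul_apply_eq_comp, ih, hW f _ (hφ.iterate n hz),
      ← Function.iterate_succ_apply' φ n z, prod_range_succ, mul_assoc]

theorem IsCO.eval_pow (hφ : MapsTo φ unitDisk unitDisk) (hC : IsCO φ C) (n : ℕ) (f : H2)
    {z : ℂ} (hz : z ∈ unitDisk) : H2.eval ((C ^ n) f) z = H2.eval f (φ^[n] z) := by
  rw [hC.isWCO.eval_pow hφ n f hz, prod_const_one, one_mul]

variable (hφ : MapsTo φ unitDisk unitDisk) (hW : IsWCO ψ φ W) (hC : IsCO φ C)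
include hφ hW hC

theorem IsWCO.norm_pow_add_le {M c : ℝ} {N : ℕ} (hM : ∀ z ∈ unitDisk, ‖ψ z‖ ≤ M)
    (hc : ∀ j ≥ N, ∀ z ∈ unitDisk, ‖ψ (φ^[j] z)‖ ≤ c) (n : ℕ) :
    ‖W ^ (N + n)‖ ≤ M ^ N * ‖C ^ N‖ * c ^ n * ‖C ^ n‖ := by
  have hM0 : 0 ≤ M := (norm_nonneg _).trans (hM 0 (by simp [unitDisk]))
  have hc0 : 0 ≤ c := (norm_nonneg _).trans (hc N le_rfl 0 (by simp [unitDisk]))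
  refine ContinuousLinearMap.opNorm_le_bound _ (by positivity) fun f => ?_
  have hpt : ‖(W ^ (N + n)) f‖ ≤ M ^ N * c ^ n * ‖(C ^ (N + n)) f‖ := by
    refine H2.norm_le_mul_norm_of_norm_eval_le (by positivity) fun z hz => ?_
    rw [hW.eval_pow hφ _ _ hz, hC.eval_pow hφ _ _ hz, norm_mul, norm_prod, prod_range_add]
    gcongr
    · exact (prod_le_prod (fun _ _ => norm_nonneg _)
        fun j _ => hM _ (hφ.iterate j hz)).trans_eq (by simp)
    · exact (prod_le_prod (fun _ _ => norm_nonneg _)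
        fun j _ => hc _ (Nat.le_add_right N j) z hz).trans_eq (by simp)
  calc ‖(W ^ (N + n)) f‖ ≤ M ^ N * c ^ n * ‖(C ^ (N + n)) f‖ := hpt
    _ ≤ M ^ N * c ^ n * (‖C ^ N‖ * ‖C ^ n‖ * ‖f‖) := by
      gcongr
      rw [pow_add]
      exact ((C ^ N * C ^ n).le_opNorm f).trans (by gcongr; exact norm_mul_le _ _)
    _ = _ := by ring

theorem IsCO.norm_pow_add_le {c : ℝ} (hc0 : 0 < c) {N : ℕ}
    (hc : ∀ j ≥ N, ∀ z ∈ unitDisk, c ≤ ‖ψ (φ^[j] z)‖) (n : ℕ) :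
    ‖C ^ (N + n)‖ ≤ ‖C ^ N‖ * c⁻¹ ^ n * ‖W ^ n‖ := by
  refine ContinuousLinearMap.opNorm_le_bound _ (by positivity) fun f => ?_
  have hpt : ‖(C ^ (N + n)) f‖ ≤ c⁻¹ ^ n * ‖(C ^ N) ((W ^ n) f)‖ := by
    refine H2.norm_le_mul_norm_of_norm_eval_le (by positivity) fun z hz => ?_
    have hzN := hφ.iterate N hz
    rw [hC.eval_pow hφ _ _ hz, hC.eval_pow hφ _ _ hz, hW.eval_pow hφ _ _ hzN, norm_mul,
      norm_prod, add_comm, Function.iterate_add_apply, ← mul_assoc]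
    refine le_mul_of_one_le_left (norm_nonneg _) ?_
    rw [inv_pow, inv_mul_eq_div, one_le_div (by positivity)]
    refine (prod_le_prod (fun _ _ => hc0.le) fun j _ => ?_).trans_eq' (by simp)
    rw [← Function.iterate_add_apply]
    exact hc _ (Nat.le_add_left N j) z hz
  calc ‖(C ^ (N + n)) f‖ ≤ c⁻¹ ^ n * ‖(C ^ N) ((W ^ n) f)‖ := hpt
    _ ≤ c⁻¹ ^ n * (‖C ^ N‖ * (‖W ^ n‖ * ‖f‖)) := by
      gcongr
      exact ((C ^ N).le_opNorm _).trans (by gcongr; exact (W ^ n).le_opNorm f)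
    _ = _ := by ring

theorem IsWCO.spectralRadius_toReal_le {M c : ℝ} (hM : ∀ z ∈ unitDisk, ‖ψ z‖ ≤ M)
    (hc : ∀ᶠ j in atTop, ∀ z ∈ unitDisk, ‖ψ (φ^[j] z)‖ ≤ c) :
    (spectralRadius ℂ W).toReal ≤ c * (spectralRadius ℂ C).toReal := by
  obtain ⟨N, hN⟩ := eventually_atTop.1 hc
  have hc0 : 0 ≤ c := (norm_nonneg _).trans (hN N le_rfl 0 (by simp [unitDisk]))
  exact spectralRadius_toReal_le_of_norm_pow_add_le W C N hc0 (K := M ^ N * ‖C ^ N‖)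
    (.of_forall (hW.norm_pow_add_le hφ hC hM hN))

theorem IsCO.mul_spectralRadius_toReal_le {c : ℝ} (hc0 : 0 < c)
    (hc : ∀ᶠ j in atTop, ∀ z ∈ unitDisk, c ≤ ‖ψ (φ^[j] z)‖) :
    c * (spectralRadius ℂ C).toReal ≤ (spectralRadius ℂ W).toReal := by
  obtain ⟨N, hN⟩ := eventually_atTop.1 hc
  rw [← le_div_iff₀' hc0, div_eq_inv_mul]
  exact spectralRadius_toReal_le_of_norm_pow_add_le C W N (inv_nonneg.2 hc0.le)
    (.of_forall (hC.norm_pow_add_le hφ hW hc0 hN))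

end WeightedComposition

theorem statement12_general (φ ψ : ℂ → ℂ) (a : ℂ)
    (hφ : IsSelfMapOfDisk φ)
    (hUCI : TendstoUniformlyOn (fun n => φ^[n]) (fun _ => a) atTop unitDisk)
    (hψ : MemHinf ψ) (hψc : ContinuousWithinAt ψ (insert a unitDisk) a)
    (hψa : ψ a ≠ 0)
    (C : H2 →L[ℂ] H2) (hC : IsCO φ C)
    (W : H2 →L[ℂ] H2) (hW : IsWCO ψ φ W) :
    spectralRadius ℂ W = (‖ψ a‖₊ : ℝ≥0∞) * spectralRadius ℂ C := by
  obtain ⟨M, hM⟩ := hψ.2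
  have hnear : ∀ U ∈ 𝓝 ‖ψ a‖, ∀ᶠ j in atTop, ∀ z ∈ unitDisk, ‖ψ (φ^[j] z)‖ ∈ U :=
    fun U hU => hUCI.eventually_forall_comp_mem (fun j => hφ.2.iterate j) hψc.norm hU
  have key : (spectralRadius ℂ W).toReal = ‖ψ a‖ * (spectralRadius ℂ C).toReal :=
    eq_mul_of_le_mul_of_mul_le (norm_pos_iff.2 hψa)
      (fun c hc => hW.spectralRadius_toReal_le hφ.2 hC (fun z hz => hM ⟨z, hz, rfl⟩)
        (hnear _ (Iic_mem_nhds hc)))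
      (fun c hc0 hc => hC.mul_spectralRadius_toReal_le hφ.2 hW hc0 (hnear _ (Ici_mem_nhds hc)))
  rw [← ENNReal.ofReal_toReal (spectralRadius_ne_top W), key,
    ENNReal.ofReal_mul (norm_nonneg _), ENNReal.ofReal_toReal (spectralRadius_ne_top C),
    ofReal_norm, enorm_eq_nnnorm]

/-- If `φ` is UCI (its iterates converge to the Denjoy–Wolff point
uniformly on all of 𝔻) with Denjoy–Wolff point `a ∈ ∂𝔻`, `ψ ∈ H^∞` is continuous at `a`,
and `ψ(a) ≠ 0`, then `ρ(W_{ψ,φ}) = |ψ(a)|·ρ(C_φ)`. -/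
theorem statement12 (φ ψ : ℂ → ℂ) (a : ℂ)
    (hφ : IsSelfMapOfDisk φ) (ha : IsDenjoyWolff φ a) (haB : ‖a‖ = 1)
    (hUCI : TendstoUniformlyOn (fun n => φ^[n]) (fun _ => a) atTop unitDisk)
    (hψ : MemHinf ψ) (hψc : ContinuousWithinAt ψ (insert a unitDisk) a)
    (hψa : ψ a ≠ 0)
    (C : H2 →L[ℂ] H2) (hC : IsCO φ C)
    (W : H2 →L[ℂ] H2) (hW : IsWCO ψ φ W) :
    spectralRadius ℂ W = (‖ψ a‖₊ : ℝ≥0∞) * spectralRadius ℂ C :=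
  statement12_general φ ψ a hφ hUCI hψ hψc hψa C hC W hW
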